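/- Let f : ℝ^d → ℝ be a square-integrable probability density, let K : ℝ^d → ℝ be integrable with ∫ K = 1, and for a bandwidth vector h ∈ (0,∞)^d let K_h(x) = V_h^{-1} K(x/h) where V_h = ∏_j h_j and division is coordinatewise. Define S_h(x) = ∫ K_h(x − y) f(y) dy, B_h = S_h − f, and T_h(x) = 2K_h(x) − ∫ K_h(v) K_h(x + v) dv. Then ‖f‖₂² = ∬ T_h(x − y) f(x) f(y) dx dy + ∫ B_h(x)² dx. -/

import Mathlib

open MeasureTheory

/-!
Write `S = g ⋆ f` for the smoothed density and `A(u) = ∫ g(v) g(u + v) dv` for the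
autocorrelation of the kernel, so that `T = 2g - A`. Expanding the square,
`∫ (S - f)² = ∫ S² - 2 ∫ S f + ∫ f²`, while the kernel term is `2 ∫ S f - ∫ (A ⋆ f) f`.
Everything thus reduces to `∫ S² = ∫ (A ⋆ f) f`: by Fubini, `∫ S²` is the triple integral
`∭ g(x - y) g(x - z) f(y) f(z)`, and translation invariance of the measure turns the
inner integral over `x` into `A(y - z)`.
-/

/-- Rescaled kernel `K_h(x) = V_h⁻¹ K(x/h)` with `V_h = ∏ j, h j` (coordinatewise division). -/
noncomputable def kerh (d : ℕ) (K : (Fin d → ℝ) → ℝ) (h : Fin d → ℝ) (x : Fin d → ℝ) : ℝ :=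
  (∏ j, h j)⁻¹ * K (fun j => x j / h j)

theorem norm_integral_mul_le_of_norm_le {α : Type*} [MeasurableSpace α] {μ : Measure α}
    {k f : α → ℝ} {C : ℝ} (hk : ∀ y, ‖k y‖ ≤ C) (hf : Integrable f μ) :
    ‖∫ y, k y * f y ∂μ‖ ≤ C * ∫ y, ‖f y‖ ∂μ := by
  calc ‖∫ y, k y * f y ∂μ‖ ≤ ∫ y, C * ‖f y‖ ∂μ :=
        norm_integral_le_of_norm_le (hf.norm.const_mul C) (ae_of_all _ fun y => by
          rw [norm_mul]; exact mul_le_mul_of_nonneg_right (hk y) (norm_nonneg _))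
    _ = C * ∫ y, ‖f y‖ ∂μ := integral_const_mul C _

section KernelSmoothing

variable {G : Type*} [AddCommGroup G] [MeasurableSpace G] {μ : Measure G} {f g : G → ℝ} {C : ℝ}

noncomputable def kernelSmoothing (μ : Measure G) (g f : G → ℝ) (x : G) : ℝ :=
  ∫ y, g (x - y) * f y ∂μ

noncomputable def autocorrelation (μ : Measure G) (g : G → ℝ) (u : G) : ℝ :=
  ∫ v, g v * g (u + v) ∂μ

theorem norm_kernelSmoothing_le (hg : ∀ x, ‖g x‖ ≤ C) (hf : Integrable f μ) (x : G) :
    ‖kernelSmoothing μ g f x‖ ≤ C * ∫ y, ‖f y‖ ∂μ :=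
  norm_integral_mul_le_of_norm_le (fun y => hg (x - y)) hf

theorem norm_autocorrelation_le (hg : ∀ x, ‖g x‖ ≤ C) (hgi : Integrable g μ) (u : G) :
    ‖autocorrelation μ g u‖ ≤ C * ∫ v, ‖g v‖ ∂μ := by
  rw [autocorrelation, integral_congr_ae (ae_of_all _ fun v => mul_comm (g v) (g (u + v)))]
  exact norm_integral_mul_le_of_norm_le (fun v => hg (u + v)) hgi

theorem stronglyMeasurable_kernelSmoothing [MeasurableSub₂ G] [SFinite μ]
    (hg : Measurable g) (hf : Measurable f) : StronglyMeasurable (kernelSmoothing μ g f) :=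
  StronglyMeasurable.integral_prod_right' (f := fun p : G × G => g (p.1 - p.2) * f p.2)
    (Measurable.stronglyMeasurable (by fun_prop))

theorem measurable_autocorrelation [MeasurableAdd₂ G] [SFinite μ] (hg : Measurable g) :
    Measurable (autocorrelation μ g) :=
  (StronglyMeasurable.integral_prod_right'
    (f := fun p : G × G => g p.2 * g (p.1 + p.2))
    (Measurable.stronglyMeasurable (by fun_prop))).measurable

theorem integrable_sub_mul [MeasurableSub G] (hg : Measurable g) (hgC : ∀ x, ‖g x‖ ≤ C)
    (hf : Integrable f μ) (x : G) : Integrable (fun y => g (x - y) * f y) μ :=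
  hf.bdd_mul (by fun_prop : Measurable fun y => g (x - y)).aestronglyMeasurable
    (ae_of_all _ fun y => hgC (x - y))

theorem kernelSmoothing_const_mul_sub [MeasurableSub G] {k : G → ℝ} {C' : ℝ} (a : ℝ)
    (hg : Measurable g) (hgC : ∀ x, ‖g x‖ ≤ C) (hk : Measurable k) (hkC : ∀ x, ‖k x‖ ≤ C')
    (hf : Integrable f μ) (x : G) :
    kernelSmoothing μ (fun u => a * g u - k u) f x =
      a * kernelSmoothing μ g f x - kernelSmoothing μ k f x := by
  simp_rw [kernelSmoothing, sub_mul, mul_assoc]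
  rw [integral_sub ((integrable_sub_mul hg hgC hf x).const_mul a)
    (integrable_sub_mul hk hkC hf x), integral_const_mul]

theorem integral_integral_sub_mul_mul (k : G → ℝ) :
    ∫ x, ∫ y, k (x - y) * f x * f y ∂μ ∂μ = ∫ x, kernelSmoothing μ k f x * f x ∂μ := by
  refine integral_congr_ae (ae_of_all _ fun x => ?_)
  simp_rw [kernelSmoothing, ← integral_mul_const, mul_right_comm]

theorem integral_sub_mul_sub [MeasurableAdd G] [μ.IsAddRightInvariant] (y z : G) :
    ∫ x, g (x - y) * g (x - z) ∂μ = autocorrelation μ g (y - z) := by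
  rw [← integral_add_right_eq_self _ y]
  simp only [add_sub_cancel_right, autocorrelation, add_sub_assoc, add_comm _ (y - z)]

variable [MeasurableAdd₂ G] [MeasurableNeg G] [SFinite μ] [μ.IsAddRightInvariant]

theorem integrable_sub_mul_prod (hg : Integrable g μ) (hf : Integrable f μ) :
    Integrable (fun p : G × G => g (p.1 - p.2) * f p.2) (μ.prod μ) := by
  simpa only [ContinuousLinearMap.mul_apply', mul_comm (f _)] using
    hf.convolution_integrand (ContinuousLinearMap.mul ℝ ℝ) hg

theorem integrable_kernelSmoothing (hg : Integrable g μ) (hf : Integrable f μ) :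
    Integrable (kernelSmoothing μ g f) μ :=
  (integrable_sub_mul_prod hg hf).integral_prod_left

theorem integral_mul_kernelSmoothing {φ : G → ℝ} (hφ : AEStronglyMeasurable φ μ)
    (hφC : ∀ x, ‖φ x‖ ≤ C) (hg : Integrable g μ) (hf : Integrable f μ) :
    ∫ x, φ x * kernelSmoothing μ g f x ∂μ = ∫ y, (∫ x, φ x * g (x - y) ∂μ) * f y ∂μ := by
  have hint : Integrable (fun p : G × G => φ p.1 * (g (p.1 - p.2) * f p.2)) (μ.prod μ) :=
    (integrable_sub_mul_prod hg hf).bdd_mul hφ.comp_fst (ae_of_all _ fun p => hφC p.1)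
  simp_rw [kernelSmoothing, ← integral_const_mul]
  rw [integral_integral_swap hint]
  simp_rw [← integral_mul_const, mul_assoc]

theorem integral_kernelSmoothing_sq (hg : Measurable g) (hgi : Integrable g μ)
    (hgC : ∀ x, ‖g x‖ ≤ C) (hf : Measurable f) (hfi : Integrable f μ) :
    ∫ x, kernelSmoothing μ g f x ^ 2 ∂μ =
      ∫ y, kernelSmoothing μ (autocorrelation μ g) f y * f y ∂μ := by
  have hS := stronglyMeasurable_kernelSmoothing (μ := μ) hg hf
  have hSC := norm_kernelSmoothing_le hgC hfi
  calc ∫ x, kernelSmoothing μ g f x ^ 2 ∂μ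
      = ∫ y, (∫ x, kernelSmoothing μ g f x * g (x - y) ∂μ) * f y ∂μ := by
        simp_rw [sq]
        exact integral_mul_kernelSmoothing hS.aestronglyMeasurable hSC hgi hfi
    _ = ∫ y, kernelSmoothing μ (autocorrelation μ g) f y * f y ∂μ := by
        refine integral_congr_ae (ae_of_all _ fun y => ?_)
        simp_rw [mul_comm (kernelSmoothing μ g f _)]
        rw [integral_mul_kernelSmoothing (φ := fun x => g (x - y))
          (by fun_prop : Measurable fun x => g (x - y)).aestronglyMeasurable
          (fun x => hgC (x - y)) hgi hfi]
        simp_rw [integral_sub_mul_sub]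
        rfl

theorem integral_sq_eq_integral_integral_add_integral_sub_sq (hf : Measurable f)
    (hfi : Integrable f μ) (hf2 : MemLp f 2 μ) (hg : Measurable g) (hgi : Integrable g μ)
    (hgC : ∀ x, ‖g x‖ ≤ C) :
    ∫ x, f x ^ 2 ∂μ =
      (∫ x, ∫ y, (2 * g (x - y) - autocorrelation μ g (x - y)) * f x * f y ∂μ ∂μ)
        + ∫ x, (kernelSmoothing μ g f x - f x) ^ 2 ∂μ := by
  set S := kernelSmoothing μ g f
  set SA := kernelSmoothing μ (autocorrelation μ g) f
  have hS := stronglyMeasurable_kernelSmoothing (μ := μ) hg hf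
  have hAC := norm_autocorrelation_le hgC hgi
  have hAm := measurable_autocorrelation (μ := μ) hg
  have hSA := stronglyMeasurable_kernelSmoothing (μ := μ) hAm hf
  have hSf : Integrable (fun x => S x * f x) μ :=
    hfi.bdd_mul hS.aestronglyMeasurable (ae_of_all _ (norm_kernelSmoothing_le hgC hfi))
  have hSAf : Integrable (fun x => SA x * f x) μ :=
    hfi.bdd_mul hSA.aestronglyMeasurable (ae_of_all _ (norm_kernelSmoothing_le hAC hfi))
  have hS2 : Integrable (fun x => S x ^ 2) μ := by
    simpa only [sq] using (integrable_kernelSmoothing hgi hfi).bdd_mul hS.aestronglyMeasurable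
      (ae_of_all _ (norm_kernelSmoothing_le hgC hfi))
  have hT : ∫ x, ∫ y, (2 * g (x - y) - autocorrelation μ g (x - y)) * f x * f y ∂μ ∂μ
      = 2 * ∫ x, S x * f x ∂μ - ∫ x, SA x * f x ∂μ := by
    rw [integral_integral_sub_mul_mul (fun u => 2 * g u - autocorrelation μ g u)]
    simp_rw [kernelSmoothing_const_mul_sub 2 hg hgC hAm hAC hfi, sub_mul, mul_assoc]
    rw [integral_sub (hSf.const_mul 2) hSAf, integral_const_mul]
  have hB : ∫ x, (S x - f x) ^ 2 ∂μ =
      ∫ x, S x ^ 2 ∂μ - 2 * ∫ x, S x * f x ∂μ + ∫ x, f x ^ 2 ∂μ := by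
    have hexp : (fun x => (S x - f x) ^ 2) = fun x => S x ^ 2 - 2 * (S x * f x) + f x ^ 2 := by
      ext x; ring
    rw [hexp, integral_add (f := fun x => S x ^ 2 - 2 * (S x * f x))
        (hS2.sub (hSf.const_mul 2)) hf2.integrable_sq,
      integral_sub hS2 (hSf.const_mul 2), integral_const_mul]
  rw [hT, hB, integral_kernelSmoothing_sq hg hgi hgC hf hfi]
  ring

end KernelSmoothing

section RescaledKernel

variable {d : ℕ} {K : (Fin d → ℝ) → ℝ} {h : Fin d → ℝ}

theorem measurable_kerh (hK : Measurable K) : Measurable (kerh d K h) := by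
  unfold kerh
  fun_prop

theorem hasCompactSupport_kerh (hh : ∀ j, h j ≠ 0) (hK : HasCompactSupport K) :
    HasCompactSupport (kerh d K h) := by
  let φ : (Fin d → ℝ) ≃ₜ (Fin d → ℝ) :=
    Homeomorph.piCongrRight fun j => Homeomorph.mulRight₀ (h j)⁻¹ (inv_ne_zero (hh j))
  have hφ : kerh d K h = fun x => (∏ j, h j)⁻¹ * (K ∘ φ) x := by
    ext x
    simp only [kerh, Function.comp_apply, div_eq_mul_inv]
    rfl
  rw [hφ]
  exact (hK.comp_homeomorph φ).mul_left

theorem norm_kerh_le {C : ℝ} (hK : ∀ x, |K x| ≤ C) (x : Fin d → ℝ) :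
    ‖kerh d K h x‖ ≤ |(∏ j, h j)⁻¹| * C := by
  rw [kerh, norm_mul]
  exact mul_le_mul_of_nonneg_left (hK _) (abs_nonneg _)

theorem integrable_kerh (hh : ∀ j, h j ≠ 0) (hKm : Measurable K) {C : ℝ} (hK : ∀ x, |K x| ≤ C)
    (hKs : HasCompactSupport K) : Integrable (kerh d K h) :=
  memLp_one_iff_integrable.mp <| (hasCompactSupport_kerh hh hKs).memLp_of_bound
    (measurable_kerh hKm).aestronglyMeasurable _ (ae_of_all _ (norm_kerh_le hK))

end RescaledKernel

theorem stmt3_general (d : ℕ) (f K : (Fin d → ℝ) → ℝ) (h : Fin d → ℝ) (hh : ∀ j, 0 < h j)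
    (hfmeas : Measurable f) (hf1 : ∫ x, f x = 1)
    (hf2 : MemLp f 2 (volume : Measure (Fin d → ℝ)))
    (hKmeas : Measurable K) (hKbdd : ∃ C, ∀ x, |K x| ≤ C) (hKsupp : HasCompactSupport K) :
    (∫ x, f x ^ 2) =
      (∫ x, ∫ y,
          (2 * kerh d K h (x - y) - ∫ v, kerh d K h v * kerh d K h ((x - y) + v)) * f x * f y)
        + ∫ x, ((∫ y, kerh d K h (x - y) * f y) - f x) ^ 2 := by
  obtain ⟨C, hC⟩ := hKbdd
  have hfi : Integrable f := .of_integral_ne_zero (by simp [hf1])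
  exact integral_sq_eq_integral_integral_add_integral_sub_sq hfmeas hfi hf2
    (measurable_kerh hKmeas) (integrable_kerh (fun j => (hh j).ne') hKmeas hC hKsupp)
    (norm_kerh_le hC)

/-- The `L₂`-norm identity
`‖f‖₂² = ∬ T_h(x−y) f(x) f(y) dx dy + ∫ B_h(x)² dx`,
with `T_h(x) = 2K_h(x) − ∫ K_h(v)K_h(x+v) dv`, `S_h = K_h ⋆ f` and `B_h = S_h − f`. -/
theorem stmt3 (d : ℕ) (f K : (Fin d → ℝ) → ℝ) (h : Fin d → ℝ) (hh : ∀ j, 0 < h j)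
    (hfmeas : Measurable f) (hfnn : ∀ x, 0 ≤ f x) (hf1 : ∫ x, f x = 1)
    (hf2 : MemLp f 2 (volume : Measure (Fin d → ℝ)))
    (hKmeas : Measurable K) (hKbdd : ∃ C, ∀ x, |K x| ≤ C) (hKsupp : HasCompactSupport K)
    (hK1 : ∫ x, K x = 1) :
    (∫ x, f x ^ 2) =
      (∫ x, ∫ y,
          (2 * kerh d K h (x - y) - ∫ v, kerh d K h v * kerh d K h ((x - y) + v)) * f x * f y)
        + ∫ x, ((∫ y, kerh d K h (x - y) * f y) - f x) ^ 2 :=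
  stmt3_general d f K h hh hfmeas hf1 hf2 hKmeas hKbdd hKsupp
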